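/- If f : ℝ² → ℂ is integrable and radial, i.e. f(x,y) = g(√(x²+y²)) for some g : [0,∞) → ℂ, then its two-dimensional Fourier transform is also radial, and equals the Hankel transform: F₂f(ξ,ζ) = ∫_0^∞ g(r) J_0(κ r) r dr where κ = √(ξ²+ζ²). -/

import Mathlib

open MeasureTheory Real

/-- The zeroth-order Bessel function of the first kind. -/
noncomputable def J0 (z : ℝ) : ℝ :=
  ∑' k : ℕ, ((-1 : ℝ) ^ k * z ^ (2 * k)) / (2 ^ (2 * k) * (Nat.factorial k) ^ 2)

lemma cos_pow_odd_integral (k : ℕ) :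
    ∫ x in (-π)..π, Real.cos x ^ (2 * k + 1) = 0 := by
  induction k with
  | zero => simp
  | succ n ih =>
    have h : 2 * (n + 1) + 1 = (2 * n + 1) + 2 := by ring
    rw [h, integral_cos_pow, ih]
    simp

lemma cos_pow_even_integral (k : ℕ) :
    ∫ x in (-π)..π, Real.cos x ^ (2 * k)
      = 2 * π * ((2 * k).factorial / (4 ^ k * (k.factorial : ℝ) ^ 2)) := by
  induction k with
  | zero => simp; ring
  | succ n ih =>
    have h : 2 * (n + 1) = (2 * n) + 2 := by ring
    rw [h, integral_cos_pow, ih]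
    have h1 : ((2 * (n + 1)).factorial : ℝ)
        = (2 * n + 2) * ((2 * n + 1) * (2 * n).factorial) := by
      have : 2 * (n + 1) = (2 * n + 1) + 1 := by ring
      rw [this, Nat.factorial_succ, Nat.factorial_succ]
      push_cast; ring
    have h2 : (((n + 1)).factorial : ℝ) = (n + 1) * n.factorial := by
      rw [Nat.factorial_succ]; push_cast; ring
    have hf : ((2 * n).factorial : ℝ) ≠ 0 := Nat.cast_ne_zero.mpr (Nat.factorial_ne_zero _)
    have hf2 : (n.factorial : ℝ) ≠ 0 := Nat.cast_ne_zero.mpr (Nat.factorial_ne_zero _)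
    have h4 : (4 : ℝ) ^ n ≠ 0 := by positivity
    have hn2 : (2 * (n : ℝ) + 2) ≠ 0 := by positivity
    have h1' : ((2 * n + 2).factorial : ℝ)
        = (2 * n + 2) * ((2 * n + 1) * (2 * n).factorial) := by rw [← h]; exact h1
    rw [h1', h2]
    simp only [Real.sin_pi, Real.sin_neg, Real.sin_pi]
    push_cast
    field_simp
    ring

lemma integral_exp_neg_I_cos (a : ℝ) :
    ∫ θ in (-π)..π, Complex.exp (-Complex.I * (a * Real.cos θ)) = 2 * π * (J0 a : ℂ) := by
  have hpi : -π ≤ π := by linarith [Real.pi_pos]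
  set F : ℕ → ℝ → ℂ := fun n θ => (-Complex.I * (a * Real.cos θ)) ^ n / n.factorial with hF
  have hFcont : ∀ n, Continuous (F n) := by
    intro n; apply Continuous.div_const; apply Continuous.pow; fun_prop
  have hbase : ∀ θ : ℝ, ‖-Complex.I * ((a : ℂ) * ((Real.cos θ : ℝ) : ℂ))‖ ≤ |a| := by
    intro θ
    rw [norm_mul, norm_neg, Complex.norm_I, one_mul, norm_mul, Complex.norm_real,
      Complex.norm_real, Real.norm_eq_abs, Real.norm_eq_abs]
    calc |a| * |Real.cos θ| ≤ |a| * 1 := by gcongr; exact Real.abs_cos_le_one θ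
      _ = |a| := mul_one _
  have hnorm : ∀ n θ, ‖F n θ‖ ≤ |a| ^ n / n.factorial := by
    intro n θ
    simp only [hF, norm_div, norm_pow]
    have hn : ‖((n.factorial : ℕ) : ℂ)‖ = (n.factorial : ℝ) := by
      simp
    rw [hn]
    have := hbase θ
    gcongr
  have hInt : ∀ n, IntegrableOn (F n) (Set.Ioc (-π) π) volume :=
    fun n => (hFcont n).integrableOn_Ioc
  have hvol : (volume (Set.Ioc (-π) π)).toReal = 2 * π := by
    rw [Real.volume_Ioc, ENNReal.toReal_ofReal (by linarith)]
    ring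
  have hsum : Summable fun n => ∫ θ in Set.Ioc (-π) π, ‖F n θ‖ := by
    apply Summable.of_nonneg_of_le (fun n => integral_nonneg fun θ => norm_nonneg _)
      (fun n => ?_) (((Real.summable_pow_div_factorial |a|).mul_left (2 * π)))
    calc ∫ θ in Set.Ioc (-π) π, ‖F n θ‖
        ≤ ∫ _ in Set.Ioc (-π) π, (|a| ^ n / n.factorial : ℝ) := by
          apply setIntegral_mono_on ((hInt n).norm) (integrableOn_const (by
            rw [Real.volume_Ioc]; exact ENNReal.ofReal_ne_top))
            measurableSet_Ioc (fun θ _ => hnorm n θ)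
      _ = 2 * π * (|a| ^ n / n.factorial) := by
          rw [setIntegral_const, smul_eq_mul, measureReal_def, hvol]
  have hexp : ∀ θ : ℝ, Complex.exp (-Complex.I * (a * Real.cos θ)) = ∑' n, F n θ := by
    intro θ
    rw [Complex.exp_eq_exp_ℂ, NormedSpace.exp_eq_tsum_div]
  rw [intervalIntegral.integral_of_le hpi]
  simp_rw [hexp]
  rw [← integral_tsum_of_summable_integral_norm (fun n => hInt n) hsum]
  have hterm : ∀ n, (∫ θ in Set.Ioc (-π) π, F n θ)
      = (-Complex.I * a) ^ n / n.factorial * ((∫ x in (-π)..π, Real.cos x ^ n : ℝ) : ℂ) := by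
    intro n
    rw [← intervalIntegral.integral_of_le hpi]
    calc ∫ θ in (-π)..π, F n θ
        = ∫ θ in (-π)..π, ((-Complex.I * a) ^ n / n.factorial)
            * (((Real.cos θ ^ n : ℝ) : ℂ)) := by
          apply intervalIntegral.integral_congr
          intro θ _
          simp only [hF]
          push_cast
          ring
      _ = ((-Complex.I * a) ^ n / n.factorial) * ∫ θ in (-π)..π, ((Real.cos θ ^ n : ℝ) : ℂ) :=
          intervalIntegral.integral_const_mul _ _
      _ = (-Complex.I * a) ^ n / n.factorial * ((∫ x in (-π)..π, Real.cos x ^ n : ℝ) : ℂ) := by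
          rw [intervalIntegral.integral_ofReal]
  simp_rw [hterm]
  set t : ℕ → ℂ := fun n =>
    (-Complex.I * a) ^ n / n.factorial * ((∫ x in (-π)..π, Real.cos x ^ n : ℝ) : ℂ) with ht
  have htsummable : Summable t := by
    apply Summable.of_norm_bounded ((Real.summable_pow_div_factorial |a|).mul_left (2 * π))
    intro n
    have hI : ‖((∫ x in (-π)..π, Real.cos x ^ n : ℝ) : ℂ)‖ ≤ 2 * π := by
      rw [Complex.norm_real, Real.norm_eq_abs]
      have h := intervalIntegral.norm_integral_le_of_norm_le_const (C := 1)
        (f := fun x => Real.cos x ^ n) (a := -π) (b := π) (fun x _ => by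
          rw [Real.norm_eq_abs, abs_pow]
          exact pow_le_one₀ (abs_nonneg _) (Real.abs_cos_le_one x))
      rw [Real.norm_eq_abs] at h
      calc |∫ x in (-π)..π, Real.cos x ^ n| ≤ 1 * |π - -π| := h
        _ = 2 * π := by rw [one_mul, abs_of_nonneg (by linarith)]; ring
    have hc : ‖(-Complex.I * a) ^ n / (n.factorial : ℂ)‖ ≤ |a| ^ n / n.factorial := by
      rw [norm_div, norm_pow]
      have hn : ‖((n.factorial : ℕ) : ℂ)‖ = (n.factorial : ℝ) := by simp
      rw [hn]
      have : ‖-Complex.I * (a : ℂ)‖ ≤ |a| := by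
        rw [norm_mul, norm_neg, Complex.norm_I, Complex.norm_real, Real.norm_eq_abs, one_mul]
      gcongr
    calc ‖t n‖ = ‖(-Complex.I * a) ^ n / (n.factorial : ℂ)‖
          * ‖((∫ x in (-π)..π, Real.cos x ^ n : ℝ) : ℂ)‖ := norm_mul _ _
      _ ≤ (|a| ^ n / n.factorial) * (2 * π) := by
          apply mul_le_mul hc hI (norm_nonneg _) (by positivity)
      _ = 2 * π * (|a| ^ n / n.factorial) := by ring
  have hodd : ∀ k, t (2 * k + 1) = 0 := by
    intro k; simp only [ht, cos_pow_odd_integral k, Complex.ofReal_zero, mul_zero]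
  have heven : ∀ k, t (2 * k) = 2 * π * ((((-1 : ℝ) ^ k * a ^ (2 * k)) /
      (2 ^ (2 * k) * (Nat.factorial k) ^ 2) : ℝ) : ℂ) := by
    intro k
    simp only [ht, cos_pow_even_integral k]
    have h1 : (-Complex.I * a) ^ (2 * k) = (((-1 : ℝ) ^ k * a ^ (2 * k) : ℝ) : ℂ) := by
      rw [pow_mul, show (-Complex.I * (a : ℂ)) ^ 2 = -((a : ℂ) ^ 2) by
        rw [mul_pow]; simp [Complex.I_sq]; try ring]
      rw [neg_pow, ← pow_mul]
      push_cast
      try ring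
    rw [h1]
    have hfac : ((2 * k).factorial : ℂ) ≠ 0 := Nat.cast_ne_zero.mpr (Nat.factorial_ne_zero _)
    have hfk : ((k.factorial : ℂ)) ≠ 0 := Nat.cast_ne_zero.mpr (Nat.factorial_ne_zero _)
    have h2 : ((2 : ℂ) ^ (2 * k)) = 4 ^ k := by rw [pow_mul]; norm_num
    push_cast
    rw [h2]
    field_simp
  rw [← tsum_even_add_odd (htsummable.comp_injective (mul_right_injective₀ two_ne_zero))
    (htsummable.comp_injective (fun x y h => by omega))]
  simp only [hodd, tsum_zero, add_zero, heven]
  rw [tsum_mul_left, J0, Complex.ofReal_tsum]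

lemma J0_zero : J0 0 = 1 := by
  rw [J0]
  rw [tsum_eq_single 0 (fun k hk => by
    have h2k : 2 * k ≠ 0 := by omega
    simp [zero_pow h2k])]
  simp

lemma angular_integral (ξ ζ r : ℝ) :
    ∫ θ in (-π)..π,
        Complex.exp (-Complex.I * ((r * Real.cos θ) * ξ + (r * Real.sin θ) * ζ))
      = 2 * π * (J0 (Real.sqrt (ξ ^ 2 + ζ ^ 2) * r) : ℂ) := by
  set κ := Real.sqrt (ξ ^ 2 + ζ ^ 2) with hκ
  by_cases h0 : ξ = 0 ∧ ζ = 0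
  · obtain ⟨rfl, rfl⟩ := h0
    have : κ = 0 := by simp [hκ]
    rw [this]
    simp [J0_zero, two_mul]
  · have hzne : ((ξ : ℂ) + ζ * Complex.I) ≠ 0 := by
      intro h
      apply h0
      have hre := congrArg Complex.re h
      have him := congrArg Complex.im h
      simp at hre him
      exact ⟨hre, him⟩
    have habs : ‖((ξ : ℂ) + ζ * Complex.I)‖ = κ := by
      rw [Complex.norm_def, Complex.normSq_add_mul_I, hκ]
    have hκpos : 0 < κ := by
      rw [← habs]
      exact norm_pos_iff.mpr hzne
    set φ := Complex.arg ((ξ : ℂ) + ζ * Complex.I) with hφ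
    have hcos : Real.cos φ = ξ / κ := by
      rw [hφ, Complex.cos_arg hzne]
      simp [habs]
    have hsin : Real.sin φ = ζ / κ := by
      rw [hφ, Complex.sin_arg]
      simp [habs]
    have key : ∀ θ : ℝ, (r * Real.cos θ) * ξ + (r * Real.sin θ) * ζ
        = (κ * r) * Real.cos (θ - φ) := by
      intro θ
      rw [Real.cos_sub, hcos, hsin]
      field_simp
    have hkey : ∀ θ : ℝ,
        Complex.exp (-Complex.I * ((r * Real.cos θ) * ξ + (r * Real.sin θ) * ζ))
          = Complex.exp (-Complex.I * (((κ * r : ℝ) : ℂ) * Real.cos (θ - φ))) := by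
      intro θ
      have hc : ((r : ℂ) * Real.cos θ * ξ + (r : ℂ) * Real.sin θ * ζ)
          = ((κ * r : ℝ) : ℂ) * (Real.cos (θ - φ) : ℝ) := by
        exact_mod_cast congrArg Complex.ofReal (key θ)
      rw [hc]
    calc ∫ θ in (-π)..π,
          Complex.exp (-Complex.I * ((r * Real.cos θ) * ξ + (r * Real.sin θ) * ζ))
        = ∫ θ in (-π)..π,
            Complex.exp (-Complex.I * (((κ * r : ℝ) : ℂ) * Real.cos (θ - φ))) := by
          apply intervalIntegral.integral_congr
          intro θ _
          exact hkey θ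
      _ = ∫ θ in (-π - φ)..(π - φ),
            Complex.exp (-Complex.I * (((κ * r : ℝ) : ℂ) * Real.cos θ)) := by
          rw [← intervalIntegral.integral_comp_sub_right
            (fun θ => Complex.exp (-Complex.I * (((κ * r : ℝ) : ℂ) * Real.cos θ))) φ]
      _ = ∫ θ in (-π)..π, Complex.exp (-Complex.I * (((κ * r : ℝ) : ℂ) * Real.cos θ)) := by
          have hper : Function.Periodic
              (fun θ : ℝ => Complex.exp (-Complex.I * (((κ * r : ℝ) : ℂ) * Real.cos θ)))
              (2 * π) := by
            intro θ
            simp [Real.cos_add_two_pi]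
          have hshift := hper.intervalIntegral_add_eq (-π - φ) (-π)
          rw [show π - φ = (-π - φ) + 2 * π by ring, hshift,
            show (-π) + 2 * π = π by ring]
      _ = 2 * π * (J0 (κ * r) : ℂ) := integral_exp_neg_I_cos (κ * r)

/-- The two-dimensional Fourier transform of an integrable radial function is radial,
and equals the Hankel transform of the radial profile. -/
theorem fourier_of_radial_eq_hankel
    (f : ℝ × ℝ → ℂ) (g : ℝ → ℂ)
    (hint : Integrable f)
    (hrad : ∀ x y : ℝ, f (x, y) = g (Real.sqrt (x ^ 2 + y ^ 2)))
    (ξ ζ : ℝ) :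
    (1 / (2 * Real.pi)) *
        ∫ p : ℝ × ℝ, f p * Complex.exp (-Complex.I * (p.1 * ξ + p.2 * ζ)) =
      ∫ r in Set.Ioi (0 : ℝ),
        g r * (J0 (Real.sqrt (ξ ^ 2 + ζ ^ 2) * r) : ℝ) * (r : ℂ) := by
  have hpi : -π ≤ π := by linarith [Real.pi_pos]
  set F : ℝ × ℝ → ℂ :=
    fun p => f p * Complex.exp (-Complex.I * (p.1 * ξ + p.2 * ζ)) with hFdef
  -- Integrability of F
  have hmeas : AEStronglyMeasurable
      (fun p : ℝ × ℝ => Complex.exp (-Complex.I * (p.1 * ξ + p.2 * ζ))) volume := by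
    apply Continuous.aestronglyMeasurable
    fun_prop
  have hbdd : ∃ C, ∀ p : ℝ × ℝ, ‖Complex.exp (-Complex.I * (p.1 * ξ + p.2 * ζ))‖ ≤ C := by
    refine ⟨1, fun p => ?_⟩
    rw [show -Complex.I * ((p.1 : ℂ) * ξ + (p.2 : ℂ) * ζ)
        = ((-(p.1 * ξ + p.2 * ζ) : ℝ) : ℂ) * Complex.I by push_cast; ring]
    rw [Complex.norm_exp_ofReal_mul_I]
  have hF : Integrable F :=
    (Integrable.bdd_mul hint hmeas (Filter.Eventually.of_forall hbdd.choose_spec)).congr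
      (Filter.Eventually.of_forall fun p => mul_comm _ _)
  -- polar change of variables
  have hpolar := (integral_comp_polarCoord_symm F).symm
  -- integrability in polar coordinates
  have hIntOn : IntegrableOn (fun p : ℝ × ℝ => p.1 • F (polarCoord.symm p))
      polarCoord.target := by
    have himg : polarCoord.symm '' polarCoord.target = polarCoord.source :=
      polarCoord.symm.image_source_eq_target
    have h1 : IntegrableOn F (polarCoord.symm '' polarCoord.target) := hF.integrableOn
    have h2 := (integrableOn_image_iff_integrableOn_abs_det_fderiv_smul volume
      polarCoord.open_target.measurableSet
      (fun p _ => (hasFDerivAt_polarCoord_symm p).hasFDerivWithinAt)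
      polarCoord.symm.injOn F).mp h1
    apply h2.congr_fun ?_ polarCoord.open_target.measurableSet
    intro p hp
    have hdet : (LinearMap.toContinuousLinearMap (Matrix.toLin (Module.Basis.finTwoProd ℝ)
        (Module.Basis.finTwoProd ℝ)
        !![Real.cos p.2, -p.1 * Real.sin p.2; Real.sin p.2, p.1 * Real.cos p.2])).det = p.1 := by
      conv_rhs => rw [← one_mul p.1, ← Real.cos_sq_add_sin_sq p.2]
      simp only [neg_mul, LinearMap.det_toContinuousLinearMap, LinearMap.det_toLin,
        Matrix.det_fin_two_of, sub_neg_eq_add]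
      ring
    simp only [hdet, det_fderivPolarCoordSymm]
    rw [abs_of_pos hp.1]
  calc (1 / (2 * (Real.pi : ℂ))) * ∫ p : ℝ × ℝ, F p
      = (1 / (2 * (Real.pi : ℂ))) *
          ∫ p in polarCoord.target, p.1 • F (polarCoord.symm p) := by rw [hpolar]
    _ = (1 / (2 * (Real.pi : ℂ))) * ∫ r in Set.Ioi (0 : ℝ), ∫ θ in Set.Ioo (-π) π,
          (r, θ).1 • F (polarCoord.symm (r, θ)) := by
        rw [show polarCoord.target = Set.Ioi (0 : ℝ) ×ˢ Set.Ioo (-π) π from rfl]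
        rw [Measure.volume_eq_prod] at hIntOn ⊢
        rw [setIntegral_prod _ hIntOn]
    _ = (1 / (2 * (Real.pi : ℂ))) * ∫ r in Set.Ioi (0 : ℝ),
          (r : ℂ) * g r * (2 * π * (J0 (Real.sqrt (ξ ^ 2 + ζ ^ 2) * r) : ℂ)) := by
        congr 1
        apply setIntegral_congr_fun measurableSet_Ioi
        intro r hr
        have hr0 : (0 : ℝ) < r := hr
        have hfs : ∀ θ : ℝ, F (polarCoord.symm (r, θ))
            = g r * Complex.exp
              (-Complex.I * ((r * Real.cos θ) * ξ + (r * Real.sin θ) * ζ)) := by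
          intro θ
          rw [hFdef]
          simp only [polarCoord_symm_apply]
          rw [hrad]
          have hsq : (r * Real.cos θ) ^ 2 + (r * Real.sin θ) ^ 2 = r ^ 2 := by
            have h := Real.sin_sq_add_cos_sq θ
            nlinarith [h]
          rw [hsq, Real.sqrt_sq hr0.le]
          push_cast
          ring_nf
        simp only [hfs]
        have : (fun θ : ℝ => (r, θ).1 • (g r * Complex.exp
            (-Complex.I * ((r * Real.cos θ) * ξ + (r * Real.sin θ) * ζ))))
            = fun θ : ℝ => ((r : ℂ) * g r) * Complex.exp
              (-Complex.I * ((r * Real.cos θ) * ξ + (r * Real.sin θ) * ζ)) := by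
          funext θ
          simp only [Complex.real_smul]
          ring
        rw [this, integral_const_mul, ← integral_Ioc_eq_integral_Ioo,
          ← intervalIntegral.integral_of_le hpi, angular_integral ξ ζ r]
    _ = ∫ r in Set.Ioi (0 : ℝ),
          g r * (J0 (Real.sqrt (ξ ^ 2 + ζ ^ 2) * r) : ℝ) * (r : ℂ) := by
        rw [← integral_const_mul]
        apply setIntegral_congr_fun measurableSet_Ioi
        intro r _
        have hπ : ((Real.pi : ℂ)) ≠ 0 := Complex.ofReal_ne_zero.mpr Real.pi_ne_zero
        field_simp
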